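/- arXiv:1503.02133 — 5 statements merged into one kernel-verified Lean document; each statement's English description precedes it below -/
import Mathlib

section
/- Let A ⊆ B be a finite extension of commutative rings (B is module-finite over A). Then A is Noetherian if and only if B is Noetherian. -/
/-!
Formanek's argument. Let `C` be a finite `A`-algebra all of whose quotients by nonzero principal
ideals are Noetherian `A`-modules. By Zorn, since principal ideals of `C` are finitely generated
over `A`, there is an `A`-submodule `N` maximal among those containing no nonzero ideal of `C`.
Every submodule strictly above `N` contains some nonzero `bC`, so it is finitely generated modulo
the finitely generated `bC`; hence `C ⧸ N` is Noetherian. If `s` generates `C`, then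
`c ↦ (c * sᵢ mod N)ᵢ` embeds `C` into `(C ⧸ N)ˢ`, so `C` is a Noetherian `A`-module.

Noetherian induction on the ideals of a Noetherian ring `B` finite over `A` then shows that
`B` is a Noetherian `A`-module, and `A ⊆ B` is a submodule of it.
-/

open Submodule

theorem Submodule.fg_of_le_of_isNoetherian_quotient {R M : Type*} [Ring R] [AddCommGroup M]
    [Module R M] {P K : Submodule R M} (hP : P.FG) (hPK : P ≤ K) [IsNoetherian R (M ⧸ P)] :
    K.FG :=
  fg_of_fg_map_of_fg_inf_ker P.mkQ (IsNoetherian.noetherian _)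
    (by rwa [ker_mkQ, inf_eq_right.mpr hPK])

section

variable {A C : Type*} [CommRing A] [CommRing C] [Algebra A C]

theorem Ideal.restrictScalars_span_singleton (b : C) :
    (Ideal.span {b}).restrictScalars A = (⊤ : Submodule A C).map (LinearMap.mulLeft A b) := by
  ext x
  simp [Ideal.mem_span_singleton', mul_comm]

theorem Ideal.fg_restrictScalars_span_singleton [Module.Finite A C] (b : C) :
    ((Ideal.span {b}).restrictScalars A).FG := by
  rw [Ideal.restrictScalars_span_singleton]
  exact Module.Finite.fg_top.map _

variable (A) in
def Submodule.ContainsNoNonzeroIdeal (N : Submodule A C) : Prop :=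
  ∀ b : C, (Ideal.span {b}).restrictScalars A ≤ N → b = 0

namespace Submodule.ContainsNoNonzeroIdeal

theorem exists_maximal [Module.Finite A C] :
    ∃ N : Submodule A C, Maximal (ContainsNoNonzeroIdeal A) N := by
  obtain ⟨N, -, hN⟩ := zorn_le_nonempty₀ {N : Submodule A C | N.ContainsNoNonzeroIdeal A}
    (fun c hc hchain N hN => by
      refine ⟨sSup c, fun b hb => ?_, fun _ => le_sSup⟩
      obtain ⟨N', hN'c, hbN'⟩ :=
        (CompleteLattice.isCompactElement_iff_le_of_directed_sSup_le _ _).mp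
          ((fg_iff_compact _).mp (Ideal.fg_restrictScalars_span_singleton b)) c ⟨N, hN⟩
          hchain.directedOn hb
      exact hc hN'c b hbN')
    ⊥ (fun b hb => by simpa using le_bot_iff.mp hb)
  exact ⟨N, hN⟩

theorem isNoetherian [Module.Finite A C] {N : Submodule A C} (hN : N.ContainsNoNonzeroIdeal A)
    [IsNoetherian A (C ⧸ N)] : IsNoetherian A C := by
  obtain ⟨s, hs⟩ := Module.Finite.fg_top (R := A) (M := C)
  refine isNoetherian_of_injective (LinearMap.pi fun i : s => N.mkQ ∘ₗ LinearMap.mulLeft A i)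
    ((injective_iff_map_eq_zero _).mpr fun b hb => hN b ?_)
  rw [Ideal.restrictScalars_span_singleton, ← hs, map_span, span_le]
  rintro _ ⟨i, hi, rfl⟩
  simpa [mul_comm] using congr_fun hb ⟨i, hi⟩

theorem isNoetherian_quotient_of_maximal [Module.Finite A C]
    (h : ∀ b : C, b ≠ 0 → IsNoetherian A (C ⧸ Ideal.span {b}))
    {N : Submodule A C} (hN : Maximal (ContainsNoNonzeroIdeal A) N) :
    IsNoetherian A (C ⧸ N) := by
  refine ⟨fun K => ?_⟩
  rcases eq_or_ne K ⊥ with rfl | hK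
  · exact fg_bot
  rw [← map_comap_eq_of_surjective N.mkQ_surjective K]
  have hlt : N < K.comap N.mkQ := by
    refine (N.le_comap_mkQ K).lt_of_ne fun hNK => hK ?_
    rw [← map_comap_eq_of_surjective N.mkQ_surjective K, ← hNK, mkQ_map_self]
  obtain ⟨b, hbK, hb⟩ : ∃ b : C, (Ideal.span {b}).restrictScalars A ≤ K.comap N.mkQ ∧ b ≠ 0 := by
    simpa [ContainsNoNonzeroIdeal] using hN.not_prop_of_gt hlt
  have := h b hb
  have : IsNoetherian A (C ⧸ (Ideal.span {b}).restrictScalars A) :=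
    isNoetherian_of_linearEquiv (Quotient.restrictScalarsEquiv A _).symm
  exact (fg_of_le_of_isNoetherian_quotient (Ideal.fg_restrictScalars_span_singleton b) hbK).map _

end Submodule.ContainsNoNonzeroIdeal

theorem isNoetherian_of_forall_isNoetherian_quotient_span_singleton [Module.Finite A C]
    (h : ∀ b : C, b ≠ 0 → IsNoetherian A (C ⧸ Ideal.span {b})) : IsNoetherian A C := by
  obtain ⟨N, hN⟩ := ContainsNoNonzeroIdeal.exists_maximal (A := A) (C := C)
  have := ContainsNoNonzeroIdeal.isNoetherian_quotient_of_maximal h hN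
  exact hN.prop.isNoetherian

variable (A C)

theorem IsNoetherianRing.isNoetherian_of_finite [IsNoetherianRing C] [Module.Finite A C] :
    IsNoetherian A C := by
  suffices ∀ I : Ideal C, IsNoetherian A (C ⧸ I) from
    isNoetherian_of_linearEquiv (AlgEquiv.quotientBot A C).toLinearEquiv
  refine IsNoetherian.induction fun I hI => ?_
  refine isNoetherian_of_forall_isNoetherian_quotient_span_singleton fun b hb => ?_
  obtain ⟨c, rfl⟩ := Ideal.Quotient.mk_surjective b
  have hc : c ∉ I := by simpa [Ideal.Quotient.eq_zero_iff_mem] using hb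
  have hlt : I < I ⊔ Ideal.span {c} :=
    left_lt_sup.mpr fun h => hc (h (Ideal.mem_span_singleton_self c))
  have hmap : (Ideal.span {c}).map (Ideal.Quotient.mkₐ A I) =
      Ideal.span {Ideal.Quotient.mk I c} := by
    rw [Ideal.map_span, Set.image_singleton]
    rfl
  have := hI _ hlt
  exact isNoetherian_of_linearEquiv
    (hmap ▸ DoubleQuot.quotQuotEquivQuotSupₐ A I (Ideal.span {c})).symm.toLinearEquiv

theorem IsNoetherianRing.of_finite_of_faithfulSMul [FaithfulSMul A C] [Module.Finite A C]
    [IsNoetherianRing C] : IsNoetherianRing A :=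
  have := IsNoetherianRing.isNoetherian_of_finite A C
  isNoetherianRing_iff.mpr <|
    isNoetherian_of_injective (Algebra.linearMap A C) (FaithfulSMul.algebraMap_injective A C)

end

/-- **Eakin–Nagata / Hilbert basis.**
Let `A ⊆ B` be a finite extension of commutative rings (that is, `B` is
finitely generated as a module over the subring `A`).  Then `A` is Noetherian
if and only if `B` is Noetherian. -/
theorem finite_extension_noetherian_iff
    {B : Type} [CommRing B] (A : Subring B) (hfin : Module.Finite A B) :
    IsNoetherianRing A ↔ IsNoetherianRing B :=
  ⟨fun _ => IsNoetherianRing.of_finite A B, fun _ => IsNoetherianRing.of_finite_of_faithfulSMul A B⟩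
end

section
/- Let A ⊆ B be a finite extension of commutative rings of characteristic p > 0. Then A is Noetherian and F-finite if and only if B is Noetherian and F-finite. -/
/-!
Ascent is formal: `B` is a finite module over the Noetherian ring `A`, and the Frobenius of `B`
precomposed with `A → B` is `A → B` postcomposed with the (finite) Frobenius of `A`.

Descent rests on the Eakin–Nagata theorem, proved along Formanek's lines. If `M` is a finite
`R`-module that is Noetherian over some `R`-algebra, the submodules `I • M` satisfy ACC, so by
Noetherian induction we may assume `M ⧸ I • M` is Noetherian whenever `I • M ≠ 0`. A submodule `N₀`
maximal with `ann (M ⧸ N₀) = ann M` then has a Noetherian quotient, since every larger `N` contains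
`ann (M ⧸ N) • M ≠ 0`; so `R ⧸ ann M` embeds in a power of `M ⧸ N₀` and `M` is Noetherian.
With `A` Noetherian, `A` is a submodule of the finite `A`-module `B` along the Frobenius of `A`,
which is therefore finite.
-/

section

variable {R M : Type*} [CommRing R] [AddCommGroup M] [Module R M]

theorem isNoetherian_quotient_annihilator [IsNoetherian R M] :
    IsNoetherian R (R ⧸ Module.annihilator R M) := by
  obtain ⟨s, hs⟩ := IsNoetherian.noetherian (⊤ : Submodule R M)
  let θ : R →ₗ[R] s → M := LinearMap.pi fun x => LinearMap.toSpanSingleton R M x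
  have hker : LinearMap.ker θ = Module.annihilator R M := by
    rw [LinearMap.ker_pi, ← Submodule.annihilator_top, ← hs, Submodule.annihilator_span]
    rfl
  exact isNoetherian_of_linearEquiv
    ((Submodule.quotEquivOfEq _ _ hker.symm).trans θ.quotKerEquivRange).symm

theorem isNoetherian_of_isNoetherian_quotient_annihilator [Module.Finite R M]
    [IsNoetherian R (R ⧸ Module.annihilator R M)] : IsNoetherian R M := by
  let := Module.quotientAnnihilator (R := R) (M := M)
  have : IsNoetherianRing (R ⧸ Module.annihilator R M) := isNoetherian_of_tower R ‹_›
  have : Module.Finite (R ⧸ Module.annihilator R M) M :=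
    Module.Finite.of_restrictScalars_finite R _ M
  let id' : M →ₛₗ[Ideal.Quotient.mk (Module.annihilator R M)] M :=
    { toFun := id, map_add' := fun _ _ => rfl, map_smul' := fun _ _ => rfl }
  exact (id'.isNoetherian_iff_of_bijective Function.bijective_id).mpr inferInstance

theorem annihilator_le_annihilator_quotient (N : Submodule R M) :
    Module.annihilator R M ≤ Module.annihilator R (M ⧸ N) :=
  N.mkQ.annihilator_le_of_surjective N.mkQ_surjective

theorem mem_annihilator_quotient_iff {N : Submodule R M} {r : R} :
    r ∈ Module.annihilator R (M ⧸ N) ↔ ∀ m, r • m ∈ N := by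
  simp [Submodule.annihilator_quotient, Submodule.mem_colon]

theorem annihilator_quotient_sSup_eq [Module.Finite R M] {c : Set (Submodule R M)}
    (hne : c.Nonempty) (hdir : DirectedOn (· ≤ ·) c)
    (hc : ∀ N ∈ c, Module.annihilator R (M ⧸ N) = Module.annihilator R M) :
    Module.annihilator R (M ⧸ sSup c) = Module.annihilator R M := by
  refine le_antisymm (fun r hr => ?_) (annihilator_le_annihilator_quotient _)
  have hrM : (⊤ : Submodule R M).map (r • LinearMap.id) ≤ sSup c := by
    rintro _ ⟨m, -, rfl⟩
    exact mem_annihilator_quotient_iff.mp hr m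
  -- `r • M` is finitely generated, hence a compact element of the lattice of submodules
  obtain ⟨N, hNc, hle⟩ := (Submodule.fg_iff_compact _).mp (Module.Finite.fg_top.map _)
    c (sSup c) hne hdir (isLUB_sSup c) hrM
  rw [← hc N hNc, mem_annihilator_quotient_iff]
  exact fun m => hle ⟨m, trivial, rfl⟩

theorem exists_maximal_annihilator_quotient_eq [Module.Finite R M] :
    ∃ N₀ : Submodule R M,
      Maximal (fun N => Module.annihilator R (M ⧸ N) = Module.annihilator R M) N₀ := by
  obtain ⟨N₀, -, hN₀⟩ := zorn_le_nonempty₀ {N | Module.annihilator R (M ⧸ N) = _}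
    (fun c hc hchain N hN => ⟨sSup c, annihilator_quotient_sSup_eq ⟨N, hN⟩ hchain.directedOn hc,
      fun _ => le_sSup⟩)
    ⊥ (Submodule.quotEquivOfEqBot ⊥ rfl).annihilator_eq
  exact ⟨N₀, hN₀⟩

theorem isNoetherian_of_forall_isNoetherian_quotient_span_singleton_s1
    (h : ∀ x : M, x ≠ 0 → IsNoetherian R (M ⧸ R ∙ x)) : IsNoetherian R M := by
  refine ⟨fun P => ?_⟩
  by_cases hP : P = ⊥
  · exact hP ▸ Submodule.fg_bot
  obtain ⟨x, hxP, hx⟩ := (Submodule.ne_bot_iff P).mp hP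
  have := h x hx
  refine Submodule.fg_of_fg_map_of_fg_inf_ker (R ∙ x).mkQ (IsNoetherian.noetherian _) ?_
  rw [Submodule.ker_mkQ, inf_eq_right.mpr ((Submodule.span_singleton_le_iff_mem _ _).mpr hxP)]
  exact Submodule.fg_span_singleton x

theorem isNoetherian_quotient_of_forall_lt (N₀ : Submodule R M)
    (h : ∀ N, N₀ < N → IsNoetherian R (M ⧸ N)) : IsNoetherian R (M ⧸ N₀) := by
  refine isNoetherian_of_forall_isNoetherian_quotient_span_singleton_s1 fun x hx => ?_
  have hlt : N₀ < (R ∙ x).comap N₀.mkQ := by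
    simpa only [Submodule.comap_bot, Submodule.ker_mkQ] using
      Submodule.comap_strictMono_of_surjective N₀.mkQ_surjective
      (bot_lt_iff_ne_bot.mpr (Submodule.span_singleton_eq_bot.not.mpr hx))
  have := h _ hlt
  have e := Submodule.quotientQuotientEquivQuotient N₀ _ hlt.le
  rw [Submodule.map_comap_eq_of_surjective N₀.mkQ_surjective] at e
  exact isNoetherian_of_linearEquiv e.symm

theorem isNoetherian_of_forall_isNoetherian_quotient_smul_top [Module.Finite R M]
    (H : ∀ I : Ideal R, I • (⊤ : Submodule R M) ≠ ⊥ →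
      IsNoetherian R (M ⧸ I • (⊤ : Submodule R M))) :
    IsNoetherian R M := by
  obtain ⟨N₀, hN₀⟩ := exists_maximal_annihilator_quotient_eq (R := R) (M := M)
  have : IsNoetherian R (M ⧸ N₀) := by
    refine isNoetherian_quotient_of_forall_lt N₀ fun N hlt => ?_
    set I := Module.annihilator R (M ⧸ N)
    have hIN : I • (⊤ : Submodule R M) ≤ N := Submodule.smul_le.mpr fun r hr m _ =>
      mem_annihilator_quotient_iff.mp hr m
    have hI : I • (⊤ : Submodule R M) ≠ ⊥ := fun hbot => hN₀.not_prop_of_gt hlt <|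
      le_antisymm
        (Submodule.annihilator_top (R := R) (M := M) ▸ Submodule.le_annihilator_iff.mpr hbot)
        (annihilator_le_annihilator_quotient N)
    have := H I hI
    exact isNoetherian_of_surjective _
      (LinearMap.range_eq_top.mpr (Submodule.factor_surjective hIN))
  have : IsNoetherian R (R ⧸ Module.annihilator R M) :=
    hN₀.prop ▸ isNoetherian_quotient_annihilator
  exact isNoetherian_of_isNoetherian_quotient_annihilator

theorem map_mkQ_sup_smul_top (I J : Ideal R) :
    ((I ⊔ J) • ⊤ : Submodule R M).map (J • ⊤ : Submodule R M).mkQ = I • ⊤ := by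
  rw [Submodule.sup_smul, Submodule.map_sup, Submodule.mkQ_map_self, sup_bot_eq,
    Submodule.map_smul'', Submodule.map_top, Submodule.range_mkQ]

noncomputable def quotientSmulTopQuotientEquiv (I J : Ideal R) :
    ((M ⧸ J • (⊤ : Submodule R M)) ⧸ I • (⊤ : Submodule R (M ⧸ J • (⊤ : Submodule R M)))) ≃ₗ[R]
      M ⧸ (I ⊔ J) • (⊤ : Submodule R M) :=
  (Submodule.quotEquivOfEq _ _ (map_mkQ_sup_smul_top I J).symm).trans
    (Submodule.quotientQuotientEquivQuotient _ _ (Submodule.smul_mono_left le_sup_right))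

variable {S : Type*} [CommRing S] [Algebra R S] [Module S M] [IsScalarTower R S M]

theorem isNoetherian_of_isNoetherian_tower_of_finite [Module.Finite R M] [IsNoetherian S M] :
    IsNoetherian R M := by
  have restrictScalars_smul_top (I : Ideal R) :
      ((I.map (algebraMap R S) • ⊤ : Submodule S M)).restrictScalars R = I • ⊤ := by
    rw [Submodule.restrictScalars_map_smul_eq, Submodule.restrictScalars_top]
  -- Noetherian induction over the `S`-submodules `I S • M`, whose underlying `R`-modules are `I • M`
  suffices h : ∀ (N : Submodule S M) (I : Ideal R), I.map (algebraMap R S) • ⊤ = N →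
      IsNoetherian R (M ⧸ I • (⊤ : Submodule R M)) by
    have := h _ ⊥ rfl
    rw [Submodule.bot_smul] at this
    exact isNoetherian_of_linearEquiv (Submodule.quotEquivOfEqBot ⊥ rfl)
  intro N
  induction N using IsNoetherian.induction with | hgt N ih => ?_
  rintro J rfl
  refine isNoetherian_of_forall_isNoetherian_quotient_smul_top fun I hI => ?_
  have hlt : J.map (algebraMap R S) • (⊤ : Submodule S M) <
      (I ⊔ J).map (algebraMap R S) • ⊤ := by
    rw [← (Submodule.restrictScalarsEmbedding R S M).lt_iff_lt]
    simp only [Submodule.restrictScalarsEmbedding_apply, restrictScalars_smul_top]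
    refine lt_of_le_of_ne (Submodule.smul_mono_left le_sup_right) fun heq => hI ?_
    rw [← map_mkQ_sup_smul_top, ← heq, Submodule.mkQ_map_self]
  have := ih _ hlt (I ⊔ J) rfl
  exact isNoetherian_of_linearEquiv (quotientSmulTopQuotientEquiv I J).symm

end

theorem isNoetherianRing_of_finite_of_injective {A B : Type*} [CommRing A] [CommRing B]
    [Algebra A B] [Module.Finite A B] [IsNoetherianRing B]
    (hinj : Function.Injective (algebraMap A B)) : IsNoetherianRing A :=
  have : IsNoetherian A B := isNoetherian_of_isNoetherian_tower_of_finite (S := B)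
  isNoetherian_of_injective (Algebra.linearMap A B) hinj

theorem RingHom.Finite.of_comp_of_injective {A B C : Type*} [CommRing A] [CommRing B]
    [CommRing C] [IsNoetherianRing A] {f : A →+* C} {g : C →+* B} (hg : Function.Injective g)
    (h : (g.comp f).Finite) : f.Finite := by
  algebraize [f, g, g.comp f]
  exact Module.Finite.of_injective (IsScalarTower.toAlgHom A C B).toLinearMap hg

theorem finite_extension_noetherian_F_finite_iff_general
    {B : Type} [CommRing B] (p : ℕ)
    (A : Subring B)
    [ExpChar A p] [ExpChar B p]
    (hfin : Module.Finite A B) :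
    (IsNoetherianRing A ∧ (frobenius A p).Finite) ↔
      (IsNoetherianRing B ∧ (frobenius B p).Finite) := by
  have hcomm : (algebraMap A B).comp (frobenius A p) = (frobenius B p).comp (algebraMap A B) :=
    RingHom.ext fun a => (algebraMap A B).map_frobenius p a
  have hfin' : (algebraMap A B).Finite := hfin
  constructor
  · rintro ⟨hA, hFA⟩
    exact ⟨isNoetherian_of_tower A (isNoetherian_of_isNoetherianRing_of_finite A B),
      RingHom.Finite.of_comp_finite (hcomm ▸ hfin'.comp hFA)⟩
  · rintro ⟨hB, hFB⟩
    have hinj : Function.Injective (algebraMap A B) := Subtype.val_injective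
    have hA : IsNoetherianRing A := isNoetherianRing_of_finite_of_injective hinj
    exact ⟨hA, RingHom.Finite.of_comp_of_injective hinj (hcomm ▸ hFB.comp hfin')⟩

/-- **Finite extensions and F-finiteness.**
Let `A ⊆ B` be a finite extension of commutative rings of characteristic
`p > 0`.  Then `A` is Noetherian and F-finite if and only if `B` is
Noetherian and F-finite.  Here a ring `R` of characteristic `p` is F-finite
if the Frobenius endomorphism `frobenius R p` is a finite ring map, i.e. `R`
is module-finite over its subring `R^p`. -/
theorem finite_extension_noetherian_F_finite_iff
    {B : Type} [CommRing B] (p : ℕ) (hp : p.Prime) [CharP B p]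
    (A : Subring B) [CharP A p]
    [ExpChar A p] [ExpChar B p]
    (hfin : Module.Finite A B) :
    (IsNoetherianRing A ∧ (frobenius A p).Finite) ↔
      (IsNoetherianRing B ∧ (frobenius B p).Finite) :=
  finite_extension_noetherian_F_finite_iff_general p A hfin
end

section
/- Let Z = Spec B be an affine Noetherian scheme and M a finite B-module satisfying (S'_1). Then for any ideal I of B with height at least 1 (i.e., the open set U = Z \ V(I) is strongly dense), the restriction map M → Γ(U, M~) is injective. -/
open CategoryTheory AlgebraicGeometry

/-- Depth via local cohomology at the maximal ideal (following the paper). -/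
noncomputable def localDepth (A : Type) [CommRing A] [IsLocalRing A]
    (M : Type) [AddCommGroup M] [Module A M] : ℕ∞ :=
  sInf {n : ℕ∞ | ∃ m : ℕ, n = (m : ℕ∞) ∧
    Nontrivial ((localCohomology (IsLocalRing.maximalIdeal A) m).obj (ModuleCat.of A M))}

/-- `depth_{A_P} M_P` for a prime `P`. -/
noncomputable def primeLocalDepth (A : Type) [CommRing A] (P : Ideal A)
    (hP : P.IsPrime) (M : Type) [AddCommGroup M] [Module A M] : ℕ∞ :=
  haveI := hP
  localDepth (Localization.AtPrime P) (LocalizedModule P.primeCompl M)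

/-- `dim A_P`, the height of the prime `P`. -/
noncomputable def primeKrullDim (A : Type) [CommRing A] (P : Ideal A)
    (hP : P.IsPrime) : WithBot ℕ∞ :=
  haveI := hP
  ringKrullDim (Localization.AtPrime P)

/-- `dim M_P`, the dimension of the localized module. -/
noncomputable def primeModuleDim (A : Type) [CommRing A] (P : Ideal A)
    (hP : P.IsPrime) (M : Type) [AddCommGroup M] [Module A M] : WithBot ℕ∞ :=
  haveI := hP
  Order.krullDim
    (Module.support (Localization.AtPrime P) (LocalizedModule P.primeCompl M))

/-- Serre's condition `(S_n)`: `depth M_P ≥ min (n, dim M_P)` for all primes `P`. -/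
def SerreS (A : Type) [CommRing A] (M : Type) [AddCommGroup M] [Module A M]
    (n : ℕ) : Prop :=
  ∀ (P : Ideal A) (hP : P.IsPrime),
    min (n : WithBot ℕ∞) (primeModuleDim A P hP M) ≤
      (primeLocalDepth A P hP M : WithBot ℕ∞)

/-- Serre's condition `(S'_n)`: `depth M_P ≥ min (n, dim A_P)` for all primes `P`. -/
def SerreS' (A : Type) [CommRing A] (M : Type) [AddCommGroup M] [Module A M]
    (n : ℕ) : Prop :=
  ∀ (P : Ideal A) (hP : P.IsPrime),
    min (n : WithBot ℕ∞) (primeKrullDim A P hP) ≤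
      (primeLocalDepth A P hP M : WithBot ℕ∞)

/-- The ideal `I` has height at least `n`: every prime containing `I` has height
at least `n` in `Spec B`. -/
def IdealHeightGE (B : Type) [CommRing B] (I : Ideal B) (n : ℕ) : Prop :=
  ∀ (P : Ideal B) (hP : P.IsPrime), I ≤ P →
    (n : ℕ∞) ≤ Order.height (⟨P, hP⟩ : PrimeSpectrum B)

/-- The complement of `V(I)` in `Spec B`, as an open subset. -/
def complementZeroLocus (B : Type) [CommRing B] (I : Ideal B) :
    TopologicalSpace.Opens (PrimeSpectrum.Top B) :=
  ⟨(PrimeSpectrum.zeroLocus (I : Set B))ᶜ,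
    (PrimeSpectrum.isClosed_zeroLocus _).isOpen_compl⟩

/-!
If `m ≠ 0` restricts to zero on `U`, choose an associated prime `P` of `M` containing the
annihilator of `m`. As `m` dies in `M_Q` for every `Q ∈ U`, the prime `P` lies in `V(I)`, so
`ht P ≥ 1`. On the other hand `P B_P` is associated to `M_P`, so `H⁰_{P B_P}(M_P) ≠ 0` and
`depth M_P = 0`, contradicting `(S'₁)`.
-/

open CategoryTheory.Limits localCohomology

universe u

section LocalCohomologyZero

variable {A : Type u} [CommRing A]

instance preservesLimits_linearYoneda_obj (Y : ModuleCat.{u} A) :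
    PreservesLimits ((linearYoneda A (ModuleCat.{u} A)).obj Y) :=
  have : ReflectsLimits (forget (ModuleCat.{u} A)) := reflectsLimits_of_reflectsIsomorphisms
  have : PreservesLimits ((linearYoneda A (ModuleCat A)).obj Y ⋙ forget (ModuleCat A)) :=
    preservesLimits_of_natIso (NatIso.ofComponents (fun _ => Iso.refl _) (by intros; rfl) :
      yoneda.obj Y ≅ (linearYoneda A (ModuleCat A)).obj Y ⋙ forget (ModuleCat A))
  preservesLimits_of_reflects_of_preserves _ (forget (ModuleCat A))

/-- `H⁰_J(N) ≅ colim_n Hom(A ⧸ J ^ n, N)`, since `Ext⁰ = Hom`. -/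
noncomputable def localCohomologyZeroIsoColimit (J : Ideal A) (N : ModuleCat.{u} A) :
    (localCohomology J 0).obj N ≅
      colimit ((ringModIdeals (idealPowersDiagram J)).op ⋙ (linearYoneda A (ModuleCat A)).obj N) :=
  let F := (linearYoneda A (ModuleCat.{u} A)).obj N
  have : PreservesFiniteLimits F := PreservesLimits.preservesFiniteLimits F
  have : PreservesFiniteColimits F.rightOp := preservesFiniteColimits_rightOp _
  let e : (F.rightOp.leftDerived 0).leftOp ≅ F :=
    NatIso.ofComponents (fun X => (F.rightOp.leftDerivedZeroIsoSelf.app X.unop).unop.symm)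
      fun f => (congrArg Quiver.Hom.unop
        (F.rightOp.leftDerivedZeroIsoSelf.inv.naturality f.unop)).symm
  colimitObjIsoColimitCompEvaluation (diagram (idealPowersDiagram J) 0) N ≪≫
    HasColimit.isoOfNatIso (Functor.isoWhiskerLeft (ringModIdeals (idealPowersDiagram J)).op e)

theorem nontrivial_localCohomology_zero_of_smul_eq_zero {J : Ideal A} {N : Type u}
    [AddCommGroup N] [Module A N] {y : N} (hy : y ≠ 0) (hJy : ∀ a ∈ J, a • y = 0) :
    Nontrivial ((localCohomology J 0).obj (ModuleCat.of A N)) := by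
  let G := (ringModIdeals (idealPowersDiagram J)).op ⋙
    (linearYoneda A (ModuleCat A)).obj (ModuleCat.of A N)
  let t : G.obj (Opposite.op (Opposite.op 1)) := ModuleCat.ofHom <|
    Submodule.liftQ _ (LinearMap.toSpanSingleton A N y) fun a ha => by
      simpa using hJy a (by simpa [idealPowersDiagram] using ha)
  have ht : colimit.ι G _ t ≠ 0 := by
    have := preservesSmallestFilteredColimits_of_preservesFilteredColimits
      (forget (ModuleCat.{u} A))
    intro h
    obtain ⟨j, i, hi⟩ := Concrete.colimit_rep_eq_zero A G _ t h
    -- transition maps precompose with quotient maps, so `t` keeps its value `y` at `1`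
    let s : (ringModIdeals (idealPowersDiagram J)).obj j.unop ⟶ ModuleCat.of A N :=
      (G.map i).hom t
    have hs : s.hom (Submodule.Quotient.mk 1) = y := one_smul A y
    exact hy (hs.symm.trans (by rw [show s = 0 from hi]; rfl))
  exact (localCohomologyZeroIsoColimit J _).toLinearEquiv.toEquiv.nontrivial_congr.2
    ⟨⟨_, 0, ht⟩⟩

end LocalCohomologyZero

open IsLocalRing

theorem localDepth_eq_zero_of_maximalIdeal_mem_associatedPrimes {A : Type} [CommRing A]
    [IsLocalRing A] [IsNoetherianRing A] {N : Type} [AddCommGroup N] [Module A N]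
    (h : maximalIdeal A ∈ associatedPrimes A N) : localDepth A N = 0 := by
  obtain ⟨-, y, hy⟩ := isAssociatedPrime_iff.mp h
  have hy0 : y ≠ 0 := by
    rintro rfl
    exact (maximalIdeal.isMaximal A).ne_top (hy.trans (by simp))
  have hH0 := nontrivial_localCohomology_zero_of_smul_eq_zero (J := maximalIdeal A) hy0
    fun a ha => by
      rw [hy] at ha
      simpa using Submodule.mem_colon_singleton.mp ha
  exact nonpos_iff_eq_zero.mp (sInf_le ⟨0, by simp, hH0⟩)

section Localization

variable {A : Type} [CommRing A] {P : Ideal A} (hP : P.IsPrime)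

theorem primeLocalDepth_eq_zero_of_mem_associatedPrimes [IsNoetherianRing A]
    {M : Type} [AddCommGroup M] [Module A M] (hPM : P ∈ associatedPrimes A M) :
    primeLocalDepth A P hP M = 0 :=
  localDepth_eq_zero_of_maximalIdeal_mem_associatedPrimes
    (Module.associatedPrimes.mem_associatedPrimes_atPrime_of_mem_associatedPrimes hPM)

theorem primeKrullDim_eq_height :
    primeKrullDim A P hP = Order.height (⟨P, hP⟩ : PrimeSpectrum A) := by
  rw [primeKrullDim, IsLocalization.AtPrime.ringKrullDim_eq_height P,
    ← PrimeSpectrum.height_eq_orderHeight]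

theorem SerreS'.height_eq_zero_of_mem_associatedPrimes [IsNoetherianRing A]
    {M : Type} [AddCommGroup M] [Module A M] (hM : SerreS' A M 1)
    (hPM : P ∈ associatedPrimes A M) : Order.height (⟨P, hP⟩ : PrimeSpectrum A) = 0 := by
  by_contra hne
  have hdim : ((1 : ℕ) : WithBot ℕ∞) ≤ primeKrullDim A P hP := by
    rw [primeKrullDim_eq_height]
    exact_mod_cast Order.one_le_iff_ne_zero.mpr hne
  have hdepth := hM P hP
  rw [min_eq_left hdim, primeLocalDepth_eq_zero_of_mem_associatedPrimes hP hPM] at hdepth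
  norm_num at hdepth

end Localization

theorem exists_smul_eq_zero_of_tilde_toOpen_eq_zero {B : Type u} [CommRing B]
    {M : Type u} [AddCommGroup M] [Module B M] {U : (Spec (CommRingCat.of B)).Opens} {m : M}
    (hm : tilde.toOpen (ModuleCat.of (CommRingCat.of B) M) U m = 0)
    {x : PrimeSpectrum B} (hx : x ∈ U) : ∃ s ∉ x.asIdeal, s • m = 0 := by
  have hmx : LocalizedModule.mk m 1 = (0 : LocalizedModule x.asIdeal.primeCompl M) :=
    congrFun (congrArg Subtype.val (show StructureSheaf.toOpenₗ B M U m = 0 from hm)) ⟨x, hx⟩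
  exact LocalizedModule.mem_ker_mkLinearMap_iff.mp hmx

theorem restriction_injective_of_serreS'_one_general
    (B : Type) [CommRing B] [IsNoetherianRing B]
    (M : Type) [AddCommGroup M] [Module B M]
    (hM : SerreS' B M 1)
    (I : Ideal B) (hI : IdealHeightGE B I 1) :
    Function.Injective
      (tilde.toOpen (ModuleCat.of (CommRingCat.of B) M) (complementZeroLocus B I)) := by
  refine (injective_iff_map_eq_zero (tilde.toOpen _ _).hom).2 fun m hm => ?_
  by_contra hm0
  obtain ⟨P, hP, hmP⟩ := exists_le_isAssociatedPrime_of_isNoetherianRing B m hm0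
  have hIP : I ≤ P := by
    by_contra hIP
    obtain ⟨s, hsP, hs⟩ := exists_smul_eq_zero_of_tilde_toOpen_eq_zero hm
      (x := ⟨P, hP.isPrime⟩) fun h => hIP ((PrimeSpectrum.mem_zeroLocus _ _).mp h)
    exact hsP (hmP (Submodule.mem_colon_singleton.mpr ((Submodule.mem_bot B).mpr hs)))
  have hheight := hI P hP.isPrime hIP
  rw [hM.height_eq_zero_of_mem_associatedPrimes hP.isPrime hP] at hheight
  simp at hheight

/-- **(S'₁) and sections over strongly dense opens.**
Let `Z = Spec B` be an affine Noetherian scheme and `M` a finite `B`-module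
satisfying `(S'_1)`.  Then for any ideal `I` of `B` of height at least `1`
(i.e. such that `U = Z \ V(I)` is strongly dense), the restriction map
`M → Γ(U, M~)` is injective. -/
theorem restriction_injective_of_serreS'_one
    (B : Type) [CommRing B] [IsNoetherianRing B]
    (M : Type) [AddCommGroup M] [Module B M] [Module.Finite B M]
    (hM : SerreS' B M 1)
    (I : Ideal B) (hI : IdealHeightGE B I 1) :
    Function.Injective
      (tilde.toOpen (ModuleCat.of (CommRingCat.of B) M) (complementZeroLocus B I)) :=
  restriction_injective_of_serreS'_one_general B M hM I hI
end

section
/- Let (R, P) be a ℤ^s-graded homogeneous DVR with P = (α) for a homogeneous element α, and let Q be the localization of R at the set of all nonzero homogeneous elements. Then Q = R[α^{-1}] and R = Q ∩ R_P (intersection inside the fraction field). -/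
/-- A subring `V` of a field `K` is a discrete valuation ring with fraction
field `K`: there is a nonzero non-unit `π ∈ V` such that every nonzero element
of `K` is a unit of `V` times an integer power of `π`. -/
def Subring.IsDVRWithFractionField {K : Type} [Field K] (V : Subring K) : Prop :=
  ∃ π : K, π ∈ V ∧ π ≠ 0 ∧ π⁻¹ ∉ V ∧
    ∀ x : K, x ≠ 0 → ∃ (u : K) (n : ℤ), u ∈ V ∧ u⁻¹ ∈ V ∧ x = u * π ^ n

/-- A domain `R` is a Krull domain: there is a family of discrete valuation
subrings of its fraction field whose intersection is `R` and which has finite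
character (every nonzero element of the fraction field is a unit in all but
finitely many members of the family). -/
def IsKrullDomain (R : Type) [CommRing R] [IsDomain R] : Prop :=
  ∃ (ι : Type) (V : ι → Subring (FractionRing R)),
    (∀ i, (V i).IsDVRWithFractionField) ∧
    (Set.range (algebraMap R (FractionRing R)) = ⋂ i, (V i : Set (FractionRing R))) ∧
    (∀ x : FractionRing R, x ≠ 0 → {i | ¬ (x ∈ V i ∧ x⁻¹ ∈ V i)}.Finite)

section Graded

variable {s : ℕ} {B : Type} [CommRing B] [IsDomain B]
  (𝒜 : (Fin s → ℤ) → AddSubgroup B) [GradedRing 𝒜]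

/-- The multiplicative set of nonzero homogeneous elements of a `ℤ^s`-graded
domain. -/
def homogeneousSubmonoid : Submonoid B where
  carrier := {x | x ≠ 0 ∧ ∃ lam : Fin s → ℤ, x ∈ 𝒜 lam}
  one_mem' := ⟨one_ne_zero, 0, SetLike.one_mem_graded 𝒜⟩
  mul_mem' := by
    rintro a b ⟨ha, i, hi⟩ ⟨hb, j, hj⟩
    exact ⟨mul_ne_zero ha hb, i + j, SetLike.mul_mem_graded hi hj⟩

/-- The ideal `P` has height one: every prime over `P` has height at least one,
and some prime over `P` has height exactly one. -/
def IdealHeightOne (R : Type) [CommRing R] (P : Ideal R) : Prop :=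
  (∀ (Q : Ideal R) (hQ : Q.IsPrime), P ≤ Q →
      1 ≤ Order.height (⟨Q, hQ⟩ : PrimeSpectrum R)) ∧
    ∃ (Q : Ideal R) (hQ : Q.IsPrime), P ≤ Q ∧
      Order.height (⟨Q, hQ⟩ : PrimeSpectrum R) = 1

/-- `P` is the unique graded ("`G`"-)maximal ideal: it is a proper homogeneous
ideal containing every proper homogeneous ideal. -/
def IsUniqueGradedMaximal (P : Ideal B) : Prop :=
  Ideal.IsHomogeneous 𝒜 P ∧ P ≠ ⊤ ∧
    ∀ J : Ideal B, Ideal.IsHomogeneous 𝒜 J → J ≠ ⊤ → J ≤ P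

end Graded

/-!
Since `α` is a nonunit, it has positive valuation at one of the discrete valuation rings of the
Krull family, so every nonzero `t` has finite `α`-multiplicity: `t = α ^ k * c` with `α ∤ c`.
If `t` is homogeneous, so is `c`, and a homogeneous element outside `P` generates a proper
homogeneous ideal not contained in `P`, so it is a unit. Hence the homogeneous denominators are,
up to units, powers of `α`, which gives `Q = R[α⁻¹]`. The same fact makes `P = (α)` prime by the
graded prime criterion. So if `α ^ n * x = r` and `t * x = r'` with `α ∤ t`, then `α ^ n` divides
`t * r = α ^ n * r'`, hence divides `r`, and `x ∈ R`.
-/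

namespace Subring.IsDVRWithFractionField

variable {K : Type} [Field K] {V : Subring K}

theorem zpow_mem_iff_nonneg {π : K} (hπ : π ∈ V) (hπ' : π⁻¹ ∉ V) (n : ℤ) :
    π ^ n ∈ V ↔ 0 ≤ n := by
  have hπ0 : π ≠ 0 := by rintro rfl; exact hπ' (by simp)
  have of_nonneg (m : ℤ) (hm : 0 ≤ m) : π ^ m ∈ V := by
    lift m to ℕ using hm
    exact zpow_natCast π m ▸ pow_mem hπ m
  refine ⟨fun hn => ?_, of_nonneg n⟩
  by_contra! hneg
  have hinv : π⁻¹ = π ^ n * π ^ (-n - 1) := by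
    rw [← zpow_add₀ hπ0, ← zpow_neg_one]; ring_nf
  exact hπ' (hinv ▸ mul_mem hn (of_nonneg _ (by omega)))

/-- Writing `a = u * π ^ n` and `b = w * π ^ m`, the hypothesis on `a` forces `n > 0`, and
`b / a ^ k ∈ V` forces `n * k ≤ m`. -/
theorem exists_bound_of_div_pow_mem (hV : V.IsDVRWithFractionField) {a b : K} (ha : a⁻¹ ∉ V)
    (hb : b ≠ 0) : ∃ N : ℕ, ∀ k : ℕ, b / a ^ k ∈ V → k ≤ N := by
  obtain ⟨π, hπ, -, hπ', hfactor⟩ := hV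
  have ha0 : a ≠ 0 := by rintro rfl; exact ha (by simp)
  obtain ⟨u, n, hu, hu', rfl⟩ := hfactor a ha0
  obtain ⟨w, m, -, hw', rfl⟩ := hfactor b hb
  have hπ0 : π ≠ 0 := by rintro rfl; exact hπ' (by simp)
  have hu0 : u ≠ 0 := left_ne_zero_of_mul ha0
  have hw0 : w ≠ 0 := left_ne_zero_of_mul hb
  have hn : 0 < n := by
    by_contra! hn
    refine ha ?_
    rw [mul_inv, ← zpow_neg]
    exact mul_mem hu' ((zpow_mem_iff_nonneg hπ hπ' _).2 (by omega))
  refine ⟨m.toNat, fun k hk => ?_⟩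
  have hpow : π ^ (m - n * k) = w * π ^ m / (u * π ^ n) ^ k * (w⁻¹ * u ^ k) := by
    rw [zpow_sub₀ hπ0, zpow_mul, zpow_natCast]
    field_simp
    ring
  have hmk : 0 ≤ m - n * k :=
    (zpow_mem_iff_nonneg hπ hπ' _).1 (hpow ▸ mul_mem hk (mul_mem hw' (pow_mem hu k)))
  have hkn : (k : ℤ) ≤ n * k := le_mul_of_one_le_left (by positivity) hn
  omega

end Subring.IsDVRWithFractionField

theorem IsKrullDomain.finiteMultiplicity {R : Type} [CommRing R] [IsDomain R]
    (hR : IsKrullDomain R) {a b : R} (ha0 : a ≠ 0) (ha : ¬IsUnit a) (hb : b ≠ 0) :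
    FiniteMultiplicity a b := by
  obtain ⟨ι, V, hV, hrange, -⟩ := hR
  set f := algebraMap R (FractionRing R)
  have hf : Function.Injective f := IsFractionRing.injective R (FractionRing R)
  have hfa : f a ≠ 0 := (map_ne_zero_iff f hf).2 ha0
  have mem_V (c : R) (i : ι) : f c ∈ V i :=
    Set.mem_iInter.1 (hrange ▸ Set.mem_range_self c : f c ∈ ⋂ i, (V i : Set _)) i
  obtain ⟨i, hi⟩ : ∃ i, (f a)⁻¹ ∉ V i := by
    by_contra! h
    obtain ⟨c, hc⟩ : (f a)⁻¹ ∈ Set.range f := hrange ▸ Set.mem_iInter.2 h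
    refine ha (IsUnit.of_mul_eq_one c (hf ?_))
    rw [map_mul, hc, map_one, mul_inv_cancel₀ hfa]
  obtain ⟨N, hN⟩ := (hV i).exists_bound_of_div_pow_mem hi ((map_ne_zero_iff f hf).2 hb)
  refine ⟨N, fun ⟨c, hc⟩ => ?_⟩
  have hdiv : f b / f a ^ (N + 1) = f c := by
    rw [hc, map_mul, map_pow, mul_div_cancel_left₀ _ (pow_ne_zero _ hfa)]
  have := hN (N + 1) (hdiv ▸ mem_V c i)
  omega

theorem GradedRing.mem_sub_of_mul_mem {ι R σ : Type*} [AddCommGroup ι] [DecidableEq ι]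
    [CommRing R] [NoZeroDivisors R] [SetLike σ R] [AddSubgroupClass σ R] {𝒜 : ι → σ}
    [GradedRing 𝒜] {a b : R} {i j : ι} (ha : a ∈ 𝒜 i) (ha0 : a ≠ 0) (hab : a * b ∈ 𝒜 j) :
    b ∈ 𝒜 (j - i) := by
  classical
  have hcomp (k : ι) (hk : k ≠ j - i) : (DirectSum.decompose 𝒜 b k : R) = 0 := by
    have hik : j ≠ i + k := fun h => hk (by rw [h, add_sub_cancel_left])
    have := DirectSum.coe_decompose_mul_add_of_left_mem (b := b) (j := k) 𝒜 ha
    rw [DirectSum.decompose_of_mem_ne 𝒜 hab hik] at this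
    exact (mul_eq_zero.1 this.symm).resolve_left ha0
  rw [← DirectSum.sum_support_decompose 𝒜 b]
  exact sum_mem fun k _ => (eq_or_ne k (j - i)).elim (· ▸ SetLike.coe_mem _)
    fun hk => hcomp k hk ▸ zero_mem _

/-- `Ideal.IsHomogeneous.isPrime_of_homogeneous_mem_or_mem` needs a linearly ordered grading group:
regrade by `ℤ^s` with the lexicographic order. Only the `DecidableEq` instance differs between
the two gradings. -/
theorem Ideal.IsHomogeneous.isPrime_of_homogeneous_mem_or_mem_lex {s : ℕ} {R : Type}
    [CommRing R] {𝒜 : (Fin s → ℤ) → AddSubgroup R} [GradedRing 𝒜] {P : Ideal R}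
    (hP : P.IsHomogeneous 𝒜) (hP_ne_top : P ≠ ⊤)
    (homogeneous_mem_or_mem : ∀ {x y : R}, SetLike.IsHomogeneousElem 𝒜 x →
      SetLike.IsHomogeneousElem 𝒜 y → x * y ∈ P → x ∈ P ∨ y ∈ P) :
    P.IsPrime := by
  have hcoe (d : DecidableEq (Lex (Fin s → ℤ))) :
      @DirectSum.coeAddMonoidHom _ _ _ d _ _ _ (fun i => 𝒜 (ofLex i)) =
        DirectSum.coeAddMonoidHom 𝒜 := by
    congr; exact Subsingleton.elim _ _
  let _ : DecidableEq (Lex (Fin s → ℤ)) := LinearOrder.toDecidableEq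
  let _ : GradedRing fun i : Lex (Fin s → ℤ) => 𝒜 (ofLex i) :=
    { one_mem := SetLike.one_mem_graded 𝒜
      mul_mem := fun _ _ _ _ ha hb => SetLike.mul_mem_graded ha hb
      decompose' := DirectSum.decompose 𝒜
      left_inv := hcoe _ ▸ DirectSum.Decomposition.left_inv (ℳ := 𝒜)
      right_inv := hcoe _ ▸ DirectSum.Decomposition.right_inv (ℳ := 𝒜) }
  exact isPrime_of_homogeneous_mem_or_mem (𝒜 := fun i : Lex (Fin s → ℤ) => 𝒜 (ofLex i))
    hP hP_ne_top fun ⟨i, hx⟩ ⟨j, hy⟩ => homogeneous_mem_or_mem ⟨i, hx⟩ ⟨j, hy⟩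

theorem IdealHeightOne.ne_bot {R : Type} [CommRing R] [IsDomain R] {P : Ideal R}
    (hP : IdealHeightOne R P) : P ≠ ⊥ := by
  rintro rfl
  have hbot := hP.1 ⊥ Ideal.isPrime_bot le_rfl
  rw [Order.height_eq_zero.2 fun _ _ => (PrimeSpectrum.asIdeal_le_asIdeal _ _).1 bot_le] at hbot
  exact absurd hbot (by simp)

theorem Prime.mem_range_algebraMap_of_pow_mul_of_mul {R K : Type*} [CommRing R] [IsDomain R]
    [Field K] [Algebra R K] [IsFractionRing R K] {p t r r' : R} {x : K} {n : ℕ} (hp : Prime p)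
    (hpt : ¬p ∣ t) (hpx : algebraMap R K p ^ n * x = algebraMap R K r)
    (htx : algebraMap R K t * x = algebraMap R K r') : x ∈ Set.range (algebraMap R K) := by
  have hinj := IsFractionRing.injective R K
  have htr : t * r = p ^ n * r' := hinj <| by
    simp only [map_mul, map_pow, ← hpx, ← htx]; ring
  obtain ⟨c, rfl⟩ := hp.pow_dvd_of_dvd_mul_left n hpt ⟨r', htr⟩
  refine ⟨c, mul_left_cancel₀ (pow_ne_zero n ((map_ne_zero_iff _ hinj).2 hp.ne_zero)) ?_⟩
  rw [hpx, map_mul, map_pow]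

section Graded

variable {s : ℕ} {R : Type} [CommRing R] {𝒜 : (Fin s → ℤ) → AddSubgroup R}
  [GradedRing 𝒜] {P : Ideal R}

namespace IsUniqueGradedMaximal

theorem isUnit_of_notMem (hP : IsUniqueGradedMaximal 𝒜 P) {a : R} {i : Fin s → ℤ}
    (ha : a ∈ 𝒜 i) (haP : a ∉ P) : IsUnit a := by
  by_contra hu
  refine haP (hP.2.2 _ ?_ (mt Ideal.span_singleton_eq_top.1 hu) (Ideal.mem_span_singleton_self a))
  exact Ideal.homogeneous_span 𝒜 _ fun x (hx : x = a) => ⟨i, hx ▸ ha⟩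

theorem isPrime (hP : IsUniqueGradedMaximal 𝒜 P) : P.IsPrime :=
  hP.1.isPrime_of_homogeneous_mem_or_mem_lex hP.2.1 fun ⟨_, hx⟩ _ hxy =>
    or_iff_not_imp_left.2 fun hxP => (P.unit_mul_mem_iff_mem (hP.isUnit_of_notMem hx hxP)).1 hxy

variable [IsDomain R] {α : R} {lam : Fin s → ℤ}

theorem exists_eq_pow_mul_unit (hP : IsUniqueGradedMaximal 𝒜 P) (hR : IsKrullDomain R)
    (hα : P = Ideal.span {α}) (hα0 : α ≠ 0) (hαlam : α ∈ 𝒜 lam) {t : R} {μ : Fin s → ℤ}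
    (ht0 : t ≠ 0) (ht : t ∈ 𝒜 μ) : ∃ (k : ℕ) (u : Rˣ), t = α ^ k * u := by
  have hαunit : ¬IsUnit α := fun h => hP.2.1 (hα ▸ Ideal.span_singleton_eq_top.2 h)
  obtain ⟨c, hc, hαc⟩ := (hR.finiteMultiplicity hα0 hαunit ht0).exists_eq_pow_mul_and_not_dvd
  have hc_mem : c ∈ 𝒜 (μ - multiplicity α t • lam) :=
    GradedRing.mem_sub_of_mul_mem (SetLike.pow_mem_graded _ hαlam) (pow_ne_zero _ hα0) (hc ▸ ht)
  have hcP : c ∉ P := by rwa [hα, Ideal.mem_span_singleton]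
  exact ⟨_, (hP.isUnit_of_notMem hc_mem hcP).unit, hc⟩

theorem exists_pow_mul_eq_algebraMap {K : Type*} [CommRing K] [Algebra R K]
    (hP : IsUniqueGradedMaximal 𝒜 P) (hR : IsKrullDomain R) (hα : P = Ideal.span {α})
    (hα0 : α ≠ 0) (hαlam : α ∈ 𝒜 lam) {t r : R} {x : K} (ht : t ∈ homogeneousSubmonoid 𝒜)
    (htx : algebraMap R K t * x = algebraMap R K r) :
    ∃ (n : ℕ) (r' : R), algebraMap R K α ^ n * x = algebraMap R K r' := by
  obtain ⟨ht0, μ, htμ⟩ := ht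
  obtain ⟨k, u, rfl⟩ := hP.exists_eq_pow_mul_unit hR hα hα0 hαlam ht0 htμ
  have hu : algebraMap R K ↑u⁻¹ * algebraMap R K u = 1 := by
    rw [← map_mul, Units.inv_mul, map_one]
  refine ⟨k, ↑u⁻¹ * r, ?_⟩
  rw [map_mul, ← htx, map_mul, map_pow]
  linear_combination (-(algebraMap R K α ^ k * x)) * hu

end IsUniqueGradedMaximal

end Graded

/-- **The homogeneous localization of a homogeneous DVR.**
Let `(R, P)` be a `ℤ^s`-graded homogeneous DVR (a graded Krull domain with
unique graded maximal ideal `P` of height one) with `P = (α)` for a homogeneous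
element `α`, and let `Q` be the localization of `R` at the set of all nonzero
homogeneous elements.  Then, inside the fraction field, `Q = R[α⁻¹]` and
`R = Q ∩ R_P`. -/
theorem homogeneous_dvr_localization_eq
    {s : ℕ} {R : Type} [CommRing R] [IsDomain R]
    (𝒜 : (Fin s → ℤ) → AddSubgroup R) [GradedRing 𝒜]
    (hKrull : IsKrullDomain R)
    (P : Ideal R) (hmax : IsUniqueGradedMaximal 𝒜 P)
    (hht : IdealHeightOne R P)
    (α : R) (hα : P = Ideal.span {α}) (hαhom : ∃ lam : Fin s → ℤ, α ∈ 𝒜 lam) :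
    ({x : FractionRing R | ∃ r t : R, t ∈ homogeneousSubmonoid 𝒜 ∧
        algebraMap R (FractionRing R) t * x = algebraMap R (FractionRing R) r}
      = {x : FractionRing R | ∃ (n : ℕ) (r : R),
          (algebraMap R (FractionRing R) α) ^ n * x = algebraMap R (FractionRing R) r}) ∧
    (Set.range (algebraMap R (FractionRing R)) =
      {x : FractionRing R | ∃ r t : R, t ∈ homogeneousSubmonoid 𝒜 ∧
        algebraMap R (FractionRing R) t * x = algebraMap R (FractionRing R) r} ∩
      {x : FractionRing R | ∃ r t : R, t ∉ P ∧
        algebraMap R (FractionRing R) t * x = algebraMap R (FractionRing R) r}) := by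
  obtain ⟨lam, hαlam⟩ := hαhom
  have hα0 : α ≠ 0 := fun h => hht.ne_bot (by rw [hα, h, Ideal.span_singleton_eq_bot])
  have hprime : Prime α := (Ideal.span_singleton_prime hα0).1 (hα ▸ hmax.isPrime)
  refine ⟨Set.ext fun x => ⟨?_, ?_⟩, Set.ext fun x => ⟨?_, ?_⟩⟩
  · rintro ⟨r, t, ht, htx⟩
    exact hmax.exists_pow_mul_eq_algebraMap hKrull hα hα0 hαlam ht htx
  · rintro ⟨n, r, hx⟩
    exact ⟨r, α ^ n, ⟨pow_ne_zero n hα0, n • lam, SetLike.pow_mem_graded n hαlam⟩, by rwa [map_pow]⟩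
  · rintro ⟨r, rfl⟩
    exact ⟨⟨r, 1, one_mem _, by simp⟩, ⟨r, 1, P.ne_top_iff_one.1 hmax.2.1, by simp⟩⟩
  · rintro ⟨⟨r₀, t₀, ht₀, ht₀x⟩, r', t, htP, htx⟩
    obtain ⟨n, r, hx⟩ := hmax.exists_pow_mul_eq_algebraMap hKrull hα hα0 hαlam ht₀ ht₀x
    exact hprime.mem_range_algebraMap_of_pow_mul_of_mul
      (by rwa [hα, Ideal.mem_span_singleton] at htP) hx htx
end

section
/- Let Z be a locally Noetherian scheme with a 2-canonical module ω, and let M be a coherent sheaf on Z such that the natural map M → M^{∨∨} is an isomorphism, where (−)^∨ = Hom_{O_Z}(−, ω). If Z = Spec B is affine, then there is an exact sequence 0 → M → K^0 → K^1 where K^0, K^1 are finite direct sums of copies of ω. -/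
/-! Dualizing a finite free presentation `B^m → B^n → N → 0` with the left exact functor
`Hom_B(-, ω)` gives `0 → N^∨ → ω^n → ω^m`; for `N = M^∨` and `M` reflexive, `N^∨ ≅ M`. -/

open CategoryTheory

/-- `E` is an injective hull of the residue field of the local ring `A`:
an injective module containing the residue field as an essential submodule. -/
def IsInjectiveHullOfResidueField (A : Type) [CommRing A] [IsLocalRing A]
    (E : Type) [AddCommGroup E] [Module A E] : Prop :=
  Module.Injective A E ∧
    ∃ f : IsLocalRing.ResidueField A →ₗ[A] E, Function.Injective f ∧
      ∀ N : Submodule A E, N ≠ ⊥ → N ⊓ LinearMap.range f ≠ ⊥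

/-- Aoyama's definition: a finite module `K` over a Noetherian local ring `A`
of dimension `d` is a canonical module if `K ⊗_A Â ≅ Hom_A(H^d_m(A), E)`,
where `E` is an injective hull of the residue field. -/
def IsCanonicalModuleLocal (A : Type) [CommRing A] [IsLocalRing A]
    (K : Type) [AddCommGroup K] [Module A K] : Prop :=
  Module.Finite A K ∧
  ∃ (E : Type) (_ : AddCommGroup E) (_ : Module A E),
    IsInjectiveHullOfResidueField A E ∧
    Nonempty
      ((TensorProduct A K (AdicCompletion (IsLocalRing.maximalIdeal A) A)) ≃ₗ[A]
        (((localCohomology (IsLocalRing.maximalIdeal A)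
            (((ringKrullDim A).unbotD 0).untopD 0)).obj (ModuleCat.of A A)) →ₗ[A] E))

/-- At the prime `P`, the localization `ω_P` is either zero or a canonical
module of the local ring `B_P`. -/
def ZeroOrCanonicalAt (B : Type) [CommRing B] (P : Ideal B) (hP : P.IsPrime)
    (ω : Type) [AddCommGroup ω] [Module B ω] : Prop :=
  haveI := hP
  Subsingleton (LocalizedModule P.primeCompl ω) ∨
    IsCanonicalModuleLocal (Localization.AtPrime P) (LocalizedModule P.primeCompl ω)

/-- A finite module `ω` over a Noetherian ring `B` is `n`-canonical if it
satisfies `(S'_n)` and is zero or canonical at every prime of height `< n`. -/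
def IsNCanonicalModule (B : Type) [CommRing B]
    (ω : Type) [AddCommGroup ω] [Module B ω] (n : ℕ) : Prop :=
  Module.Finite B ω ∧ SerreS' B ω n ∧
    ∀ (P : Ideal B) (hP : P.IsPrime),
      primeKrullDim B P hP < (n : WithBot ℕ∞) → ZeroOrCanonicalAt B P hP ω

open LinearMap in
theorem Module.FinitePresentation.exists_injective_exact_pi_linearMap
    (R : Type*) [CommRing R] (N ω : Type*) [AddCommGroup N] [Module R N]
    [Module.FinitePresentation R N] [AddCommGroup ω] [Module R ω] :
    ∃ (n m : ℕ) (f : (N →ₗ[R] ω) →ₗ[R] (Fin n → ω)) (g : (Fin n → ω) →ₗ[R] (Fin m → ω)),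
      Function.Injective f ∧ Function.Exact f g := by
  obtain ⟨n, m, p, d, hp, hd⟩ := Module.FinitePresentation.exists_fin' R N
  let e₀ := LinearEquiv.piRing R ω (Fin n) R
  let e₁ := LinearEquiv.piRing R ω (Fin m) R
  refine ⟨n, m, e₀ ∘ₗ lcomp R ω p, (e₁ ∘ₗ lcomp R ω d) ∘ₗ e₀.symm, ?_, ?_⟩
  · exact e₀.injective.comp (lcomp_injective_of_surjective p hp)
  · rw [LinearEquiv.conj_exact_iff_exact, LinearEquiv.postcomp_exact_iff_exact]
    exact exact_lcomp_of_exact_of_surjective ω hd hp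

/-- **Resolution by a 2-canonical module (affine case).**
Let `B` be a Noetherian ring (so `Z = Spec B` is an affine locally Noetherian
scheme) with a 2-canonical module `ω`, and let `M` be a finite `B`-module such
that the natural map `M → M^∨∨` is an isomorphism, where `(−)^∨ = Hom_B(−, ω)`.
Then there is an exact sequence `0 → M → K^0 → K^1` where `K^0`, `K^1` are
finite direct sums of copies of `ω`. -/
theorem exists_resolution_by_two_canonical
    (B : Type) [CommRing B] [IsNoetherianRing B]
    (ω : Type) [AddCommGroup ω] [Module B ω]
    (hω : IsNCanonicalModule B ω 2)
    (M : Type) [AddCommGroup M] [Module B M] [Module.Finite B M]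
    (hM : Function.Bijective
      ((LinearMap.id : (M →ₗ[B] ω) →ₗ[B] (M →ₗ[B] ω)).flip)) :
    ∃ (r₀ r₁ : ℕ) (f : M →ₗ[B] (Fin r₀ → ω)) (g : (Fin r₀ → ω) →ₗ[B] (Fin r₁ → ω)),
      Function.Injective f ∧ LinearMap.range f = LinearMap.ker g := by
  have : Module.Finite B ω := hω.1
  have := Module.finitePresentation_of_finite B (M →ₗ[B] ω)
  obtain ⟨r₀, r₁, f, g, hf, hfg⟩ :=
    Module.FinitePresentation.exists_injective_exact_pi_linearMap B (M →ₗ[B] ω) ω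
  let ev := LinearEquiv.ofBijective _ hM
  refine ⟨r₀, r₁, f ∘ₗ ev, g, hf.comp ev.injective, ?_⟩
  exact (LinearEquiv.precomp_exact_iff_exact.mpr hfg).linearMap_ker_eq.symm
end
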